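/- Fix a lacing diagram w = (w_1,…,w_n). The Demazure product δ(P(P_1,…,P_n)) is the same permutation for every choice of pipe dreams P_1,…,P_n with P̌_j ∈ 𝒫(w_j) for all j = 1,…,n; that is, it is independent of the choice of P_1,…,P_n. -/

import Mathlib

/-!
Read `P(P_1, …, P_n)` row by row. In block row `j`, the letters of the crossing tiles of a row
exceed the letters of `P_{j+1}` in the rows below it by at least two, so they commute with them
in the 0-Hecke monoid; hence `δ(P(P_1, …, P_n))` is the Demazure product of a word in which the
(shifted) words of the blocks `P_{j+1}` alternate with words not depending on the `P_j`.
Demazure products are compatible with concatenation, since left and right multiplication in the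
0-Hecke monoid commute, so only the `δ(P_j)` matter. Finally `δ(P_j)` is determined by
`δ(P̌_j) = w̃_j`: rotating a pipe dream reverses its word and complements its letters, which
inverts the Demazure product and conjugates it by `w₀`.
-/

open scoped Classical

noncomputable section

/-! ### Pipe dreams and Demazure products -/

/-- A pipe dream: the set of crossing tiles (0-based positions). -/
abbrev PD := Finset (ℕ × ℕ)

/-- The simple reflection `s_i` (0-based: swaps `i` and `i+1`). -/
def sGen (i : ℕ) : Equiv.Perm ℕ := Equiv.swap i (i + 1)

/-- Coxeter length of a permutation of `ℕ`: the number of inversions. -/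
noncomputable def clen (v : Equiv.Perm ℕ) : ℕ :=
  Set.ncard {pq : ℕ × ℕ | pq.1 < pq.2 ∧ v pq.2 < v pq.1}

/-- One step of the Demazure (0-Hecke) product: multiply by `s_i` unless it drops length. -/
noncomputable def demStep (w : Equiv.Perm ℕ) (i : ℕ) : Equiv.Perm ℕ :=
  if clen w < clen (w * sGen i) then w * sGen i else w

/-- Demazure product of a word in the simple reflections. -/
noncomputable def demWord (word : List ℕ) : Equiv.Perm ℕ := word.foldl demStep 1

/-- A pipe dream fits in the `k × l` grid. -/
def InGrid (k l : ℕ) (P : PD) : Prop := ∀ pq ∈ P, pq.1 < k ∧ pq.2 < l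

/-- The crossing tiles of `P` in reading order: along rows, right to left,
top to bottom. -/
def posList (k l : ℕ) (P : PD) : List (ℕ × ℕ) :=
  (List.range k).flatMap fun i =>
    ((List.range l).reverse).filterMap fun j => if (i, j) ∈ P then some (i, j) else none

/-- The word of a pipe dream: the crossing tile at (0-based) `(i,j)` contributes the
letter `i + j` (antidiagonal index), read along rows right-to-left, top-to-bottom. -/
def pdWord (k l : ℕ) (P : PD) : List ℕ := (posList k l P).map fun pq => pq.1 + pq.2

/-- The Demazure product `δ(P)` of a pipe dream. -/
noncomputable def pdDelta (k l : ℕ) (P : PD) : Equiv.Perm ℕ := demWord (pdWord k l P)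

/-- `P` rotated through 180 degrees inside the `k × l` grid. -/
def rot180 (k l : ℕ) (P : PD) : PD := P.image fun pq => (k - 1 - pq.1, l - 1 - pq.2)

/-- The simplification of `P`: omit the `t`-th letter whenever the Demazure product of
the length-`t` prefix equals that of the length-`t+1` prefix (lexicographically first
subword with full Demazure product). -/
noncomputable def simplification (k l : ℕ) (P : PD) : PD :=
  P.filter fun pos => ∀ t : ℕ, (posList k l P)[t]? = some pos →
    demWord ((pdWord k l P).take (t + 1)) ≠ demWord ((pdWord k l P).take t)

/-! ### Partial permutations -/

/-- A `k × l` partial permutation, as the relation `rel p q` ⟺ "entry 1 at `(p,q)`"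
(0-based): at most one nonzero entry in each row and column. -/
def IsPartialPerm (k l : ℕ) (rel : ℕ → ℕ → Prop) : Prop :=
  (∀ p q, rel p q → p < k ∧ q < l) ∧
  (∀ p q q', rel p q → rel p q' → q = q') ∧
  (∀ p p' q, rel p q → rel p' q → p = p')

/-- `v ∈ S_∞` is a completion of the `k × l` partial permutation `rel`:
a (finitely supported) permutation whose upper-left `k × l` corner is `rel`. -/
def IsCompletion (k l : ℕ) (rel : ℕ → ℕ → Prop) (v : Equiv.Perm ℕ) : Prop :=
  (∃ N, ∀ i, N ≤ i → v i = i) ∧ ∀ p q, p < k → q < l → (rel p q ↔ v p = q)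

/-- `v = w̃` is the minimal-length completion of `rel`. -/
def IsMinCompletion (k l : ℕ) (rel : ℕ → ℕ → Prop) (v : Equiv.Perm ℕ) : Prop :=
  IsCompletion k l rel v ∧ ∀ v', IsCompletion k l rel v' → clen v ≤ clen v'

/-- The minimal-length completion `w̃` of a partial permutation. -/
noncomputable def minComp (k l : ℕ) (rel : ℕ → ℕ → Prop) : Equiv.Perm ℕ :=
  Classical.epsilon (IsMinCompletion k l rel)

/-- `P ∈ 𝒫(w)`: pipe dreams in the `k × l` grid with Demazure product `w̃`. -/
def PipeDreamsFor (k l : ℕ) (rel : ℕ → ℕ → Prop) (P : PD) : Prop :=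
  InGrid k l P ∧ pdDelta k l P = minComp k l rel


/-! ### Block decompositions and Zelevinsky permutations -/

/-- `rowSum r j = r 0 + ⋯ + r (j-1)`. -/
def rowSum (r : ℕ → ℕ) (j : ℕ) : ℕ := ∑ q ∈ Finset.range j, r q

/-- Total size `d = r 0 + ⋯ + r n`. -/
def dTot (n : ℕ) (r : ℕ → ℕ) : ℕ := rowSum r (n + 1)

/-- Global row `p` lies in block row `j` (block rows counted from the top, of heights
`r 0, …, r n`). -/
def InBlockRow (r : ℕ → ℕ) (j p : ℕ) : Prop := rowSum r j ≤ p ∧ p < rowSum r (j + 1)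

/-- Global column `q` lies in block column `i` *from the right* (widths `r 0, …, r n`
from the right). -/
def InBlockCol (n : ℕ) (r : ℕ → ℕ) (i q : ℕ) : Prop :=
  dTot n r - rowSum r (i + 1) ≤ q ∧ q < dTot n r - rowSum r i

/-- `v` is a Zelevinsky permutation for the block decomposition given by
`r 0, …, r n`: it is a `d × d` permutation matrix (fixes everything from `d` on),
the blocks `B_{ji}` with `i ≥ j + 2` vanish, and the nonzero entries proceed from
northwest to southeast within each block row and block column. -/
def IsZelevinsky (n : ℕ) (r : ℕ → ℕ) (v : Equiv.Perm ℕ) : Prop :=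
  (∀ p, dTot n r ≤ p → v p = p) ∧
  (∀ p, p < dTot n r → ∀ j i, j ≤ n → i ≤ n → InBlockRow r j p →
    InBlockCol n r i (v p) → i ≤ j + 1) ∧
  (∀ p p', p < p' → p' < dTot n r →
    ((∃ j ≤ n, InBlockRow r j p ∧ InBlockRow r j p') ∨
     (∃ i ≤ n, InBlockCol n r i (v p) ∧ InBlockCol n r i (v p'))) → v p < v p')

/-- The rank array of a Zelevinsky permutation: `r_{ij}` is the number of nonzero
entries of `v` in the blocks weakly southeast of `B_{ji}`. -/
def rankArray (n : ℕ) (r : ℕ → ℕ) (v : Equiv.Perm ℕ) (i j : ℕ) : ℕ :=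
  ((Finset.range (dTot n r)).filter fun p =>
    rowSum r j ≤ p ∧ dTot n r - rowSum r (i + 1) ≤ v p).card

/-- `v = v(Hom)`: the unique Zelevinsky permutation with entrywise maximal rank array. -/
def IsHomZel (n : ℕ) (r : ℕ → ℕ) (v : Equiv.Perm ℕ) : Prop :=
  IsZelevinsky n r v ∧ ∀ v', IsZelevinsky n r v' →
    ∀ i j, j ≤ i → i ≤ n → rankArray n r v' i j ≤ rankArray n r v i j

/-- `vm = v(m + r)` where `v = v(r)`: the Zelevinsky permutation for the ranks
`m + r 0, …, m + r n` whose rank array is obtained by adding `m` to every entry of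
the rank array of `v`. -/
def IsShiftedZel (n : ℕ) (r : ℕ → ℕ) (v : Equiv.Perm ℕ) (m : ℕ) (vm : Equiv.Perm ℕ) : Prop :=
  IsZelevinsky n (fun j => m + r j) vm ∧
  ∀ i j, j ≤ i → i ≤ n →
    rankArray n (fun j => m + r j) vm i j = m + rankArray n r v i j

/-- The Ferrers shape `D_Hom` of all positions strictly above the block
superantidiagonal (blocks `B_{ji}` with `i ≥ j + 2`). -/
def DHom (n : ℕ) (r : ℕ → ℕ) : PD :=
  (Finset.range (dTot n r) ×ˢ Finset.range (dTot n r)).filter fun pq =>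
    ∃ j ≤ n, ∃ i ≤ n, InBlockRow r j pq.1 ∧ InBlockCol n r i pq.2 ∧ j + 2 ≤ i

/-- `P(P_1, …, P_n)`: the `d × d` pipe dream with every block strictly above the block
superantidiagonal filled with crossing tiles, the superantidiagonal `r (j-1) × r j`
block in block row `j - 1` equal to `P j`, and all other blocks empty. -/
def assemble (n : ℕ) (r : ℕ → ℕ) (P : ℕ → PD) : PD :=
  (Finset.range (dTot n r) ×ˢ Finset.range (dTot n r)).filter fun pq =>
    (∃ j ≤ n, ∃ i ≤ n, InBlockRow r j pq.1 ∧ InBlockCol n r i pq.2 ∧ j + 2 ≤ i) ∨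
    (∃ j, 1 ≤ j ∧ j ≤ n ∧ InBlockRow r (j - 1) pq.1 ∧ InBlockCol n r j pq.2 ∧
      (pq.1 - rowSum r (j - 1), pq.2 - (dTot n r - rowSum r (j + 1))) ∈ P j)

/-! ### Lacing diagrams -/

/-- A lacing diagram for ranks `r 0, …, r n`: a list `w_1, …, w_n` of partial
permutations, `w_j` of size `r (j-1) × r j` (encoded as relations, with `L j` empty
for `j` out of range). -/
def IsLacingDiagram (n : ℕ) (r : ℕ → ℕ) (L : ℕ → ℕ → ℕ → Prop) : Prop :=
  (∀ j, 1 ≤ j → j ≤ n → IsPartialPerm (r (j - 1)) (r j) (L j)) ∧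
  (∀ j, j = 0 ∨ n < j → L j = fun _ _ => False)

/-- A choice of pipe dreams `P_1, …, P_n` with `P̌_j ∈ 𝒫(w_j)` for all `j`. -/
def LacingChoices (n : ℕ) (r : ℕ → ℕ) (L : ℕ → ℕ → ℕ → Prop) (P : ℕ → PD) : Prop :=
  ∀ j, 1 ≤ j → j ≤ n → InGrid (r (j - 1)) (r j) (P j) ∧
    PipeDreamsFor (r (j - 1)) (r j) (L j) (rot180 (r (j - 1)) (r j) (P j))

/-- The Demazure product of the lacing diagram `L` is the rank array of the Zelevinsky
permutation `v`: for some (equivalently every) choice of pipe dreams `P_j` with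
`P̌_j ∈ 𝒫(w_j)`, the Demazure product of `P(P_1, …, P_n)` is `v`. -/
def LacingDem (n : ℕ) (r : ℕ → ℕ) (L : ℕ → ℕ → ℕ → Prop) (v : Equiv.Perm ℕ) : Prop :=
  (∃ P, LacingChoices n r L P) ∧
  ∀ P, LacingChoices n r L P →
    pdDelta (dTot n r) (dTot n r) (assemble n r P) = v

/-- `L(r)`: lacing diagrams whose Demazure product is the rank array of `v = v(r)`. -/
def LacingSet (n : ℕ) (r : ℕ → ℕ) (v : Equiv.Perm ℕ) : Set (ℕ → ℕ → ℕ → Prop) :=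
  {L | IsLacingDiagram n r L ∧ LacingDem n r L v}

/-- `m + w`: let the partial permutation act on `{m, m+1, …}` instead of `{0, 1, …}`. -/
def shiftRel (m : ℕ) (rel : ℕ → ℕ → Prop) : ℕ → ℕ → Prop :=
  fun p q => m ≤ p ∧ m ≤ q ∧ rel (p - m) (q - m)

/-- `m + w` for a lacing diagram, componentwise. -/
def shiftDiag (m : ℕ) (L : ℕ → ℕ → ℕ → Prop) : ℕ → ℕ → ℕ → Prop :=
  fun j => shiftRel m (L j)

/-- `l(w) = Σ_j l(w̃_j)` for a lacing diagram. -/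
noncomputable def lenLacing (n : ℕ) (r : ℕ → ℕ) (L : ℕ → ℕ → ℕ → Prop) : ℕ :=
  ∑ j ∈ Finset.Icc 1 n, clen (minComp (r (j - 1)) (r j) (L j))


/-! ### Double Grothendieck polynomials

We encode a Laurent polynomial in the row alphabet `z` and column alphabet `ż` as an
honest polynomial in the variables `z i = X (Sum.inl i)` and `b j = X (Sum.inr j)`,
where `b j` stands for the reciprocal `1/ż j` (all the `G`'s are polynomials in the
`z i` and the `ż j⁻¹`; in particular `1 - z i / ż j = 1 - z i * b j`). -/

/-- The ambient polynomial ring. -/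
abbrev GR : Type := MvPolynomial (ℕ ⊕ ℕ) ℚ

/-- The row variable `z i` (0-based). -/
noncomputable def Zv (i : ℕ) : GR := MvPolynomial.X (Sum.inl i)

/-- The column variable `b j = 1 / ż j` (0-based). -/
noncomputable def Bv (j : ℕ) : GR := MvPolynomial.X (Sum.inr j)

/-- Exact division in a ring (junk value `0` if `b ∤ a`). -/
noncomputable def exactDiv (a b : GR) : GR := if h : ∃ c, a = b * c then h.choose else 0

/-- The `i`-th Demazure operator
`∂_i f = (z_{i+1} f(z_i, z_{i+1}) - z_i f(z_{i+1}, z_i)) / (z_{i+1} - z_i)`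
(0-based `i`; it acts on the `z` alphabet only). -/
noncomputable def demOp (i : ℕ) (f : GR) : GR :=
  exactDiv
    (Zv (i + 1) * f -
      Zv i * (MvPolynomial.rename (fun s => Equiv.swap (Sum.inl i) (Sum.inl (i + 1)) s) f))
    (Zv (i + 1) - Zv i)

/-- The longest element `w_0` of `S_k` (0-based; fixes everything from `k` on). -/
def w0 (k : ℕ) : Equiv.Perm ℕ :=
  Function.Involutive.toPerm (fun i => if i < k then k - 1 - i else i)
    (by intro i; dsimp only; split_ifs <;> omega)

/-- The top double Grothendieck polynomial
`G_{w_0}(z/ż) = ∏_{i + j ≤ k} (1 - z_i/ż_j)` (1-based indices `i, j ≥ 1`). -/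
noncomputable def GrothTop (k : ℕ) : GR :=
  ∏ pq ∈ (Finset.range k ×ˢ Finset.range k).filter (fun pq => pq.1 + pq.2 + 2 ≤ k),
    (1 - Zv pq.1 * Bv pq.2)

/-- Auxiliary fuelled recursion computing double Grothendieck polynomials via
`G_{v s_i} = ∂_i G_v` whenever `l(v s_i) < l(v)`. -/
noncomputable def GrothAux (k : ℕ) : ℕ → Equiv.Perm ℕ → GR
  | 0, v => if v = w0 k then GrothTop k else 0
  | fuel + 1, v =>
    if v = w0 k then GrothTop k
    else if h : ∃ i, i + 2 ≤ k ∧ v i < v (i + 1) then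
      demOp (Nat.find h) (GrothAux k fuel (v * sGen (Nat.find h)))
    else 0

/-- The double Grothendieck polynomial `G_v(z/ż)` of `v ∈ S_k`. -/
noncomputable def Groth (k : ℕ) (v : Equiv.Perm ℕ) : GR := GrothAux k (k * k) v

/-- The least `N` such that `v` fixes everything from `N` on. -/
noncomputable def permBound (v : Equiv.Perm ℕ) : ℕ := sInf {N | ∀ i, N ≤ i → v i = i}

/-- The double Grothendieck polynomial of a finitely supported permutation
(independent of the choice of `k`). -/
noncomputable def GrothPerm (v : Equiv.Perm ℕ) : GR := Groth (permBound v) v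


/-! ### Quiver alphabets

For ranks `r 0, …, r n` with `d = r 0 + ⋯ + r n`, the row alphabet
`x = x^0, …, x^n` is the concatenation of alphabets of sizes `r 0, …, r n`: the global
row variable `z p` (for `p` in block row `j` at offset `a`) *is* the letter `x^j_{a+1}`.
Likewise the column alphabet `ȳ = y^n, …, y^0` is the concatenation of alphabets of
sizes `r n, …, r 0`: the global column variable `ż q` for `q` in block column `i`
(from the right) at offset `a` (from the left of the block) is the letter `y^i_{a+1}`.
Thus `G_{v(r)}(x/ȳ)` is just `Groth d (v(r))`. -/

/-- The block row containing global row `p`. -/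
noncomputable def blockRowOf (r : ℕ → ℕ) (p : ℕ) : ℕ :=
  if h : ∃ j, p < rowSum r (j + 1) then Nat.find h else 0

/-- The block column (from the right) containing global column `q`. -/
noncomputable def blockColOf (n : ℕ) (r : ℕ → ℕ) (q : ℕ) : ℕ :=
  if h : ∃ i, dTot n r ≤ q + rowSum r (i + 1) then Nat.find h else 0

/-- The row variable at global row `p` after reversing each alphabet `x^j` in place. -/
noncomputable def revRow (r : ℕ → ℕ) (p : ℕ) : ℕ :=
  rowSum r (blockRowOf r p) + (r (blockRowOf r p) - 1 - (p - rowSum r (blockRowOf r p)))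

/-- The column variable at global column `q` after reversing each alphabet `y^i` in
place. -/
noncomputable def revCol (n : ℕ) (r : ℕ → ℕ) (q : ℕ) : ℕ :=
  (dTot n r - rowSum r (blockColOf n r q + 1)) +
    (r (blockColOf n r q) - 1 - (q - (dTot n r - rowSum r (blockColOf n r q + 1))))

/-- The exponential reverse monomial `(1 - x̃/ỹ)^P = ∏_{+ ∈ P} (1 - x̃_+/ỹ_+)`. -/
noncomputable def ERM (n : ℕ) (r : ℕ → ℕ) (P : PD) : GR :=
  ∏ pq ∈ P, (1 - Zv (revRow r pq.1) * Bv (revCol n r pq.2))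

/-- Set the last `ℓ` variables of every finite alphabet `x^j` and `y^i` equal to `1`. -/
noncomputable def setLastOnes (n : ℕ) (r : ℕ → ℕ) (ℓ : ℕ) : GR →ₐ[ℚ] GR :=
  MvPolynomial.aeval fun s =>
    match s with
    | Sum.inl p =>
      if ∃ j ≤ n, InBlockRow r j p ∧ rowSum r (j + 1) ≤ p + ℓ then 1 else Zv p
    | Sum.inr q =>
      if ∃ i ≤ n, InBlockCol n r i q ∧ dTot n r - rowSum r i ≤ q + ℓ then 1 else Bv q

/-- For rank lists `big` and `small` (with `small j ≤ big j`): keep the first `small j`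
letters of each alphabet of sizes `big 0, …, big n` (relabelling them as the alphabets
of sizes `small 0, …, small n`) and set all remaining letters equal to `1`. -/
noncomputable def restrictAlph (n : ℕ) (big small : ℕ → ℕ) : GR →ₐ[ℚ] GR :=
  MvPolynomial.aeval fun s =>
    match s with
    | Sum.inl p =>
      if p < dTot n big then
        if p - rowSum big (blockRowOf big p) < small (blockRowOf big p) then
          Zv (rowSum small (blockRowOf big p) + (p - rowSum big (blockRowOf big p)))
        else 1
      else Zv p
    | Sum.inr q =>
      if q < dTot n big then
        if q - (dTot n big - rowSum big (blockColOf n big q + 1)) < small (blockColOf n big q)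
        then
          Bv ((dTot n small - rowSum small (blockColOf n big q + 1)) +
            (q - (dTot n big - rowSum big (blockColOf n big q + 1))))
        else 1
      else Bv q

/-- Keep the first `k` letters of the (generic) row alphabet and the first `l` letters
of the column alphabet, setting all further letters equal to `1`. -/
noncomputable def truncAlph (k l : ℕ) : GR →ₐ[ℚ] GR :=
  MvPolynomial.aeval fun s =>
    match s with
    | Sum.inl p => if p < k then Zv p else 1
    | Sum.inr q => if q < l then Bv q else 1

/-- Substitute the generic alphabets `z, ż` by the alphabets `x^{j-1}, y^j`:
`G(z/ż) ↦ G(x^{j-1}/y^j)`. -/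
noncomputable def placeBlock (n : ℕ) (r : ℕ → ℕ) (j : ℕ) : GR →ₐ[ℚ] GR :=
  MvPolynomial.rename
    (Sum.map (fun a => rowSum r (j - 1) + a) (fun a => (dTot n r - rowSum r (j + 1)) + a))

/-- `m + v`: let the permutation act on `{m, m+1, …}` instead of `{0, 1, …}`. -/
noncomputable def shiftPerm (m : ℕ) (v : Equiv.Perm ℕ) : Equiv.Perm ℕ :=
  v.viaEmbedding ⟨fun a => m + a, add_right_injective m⟩

/-! ### Stable double Grothendieck polynomials -/

/-- The stable double Grothendieck polynomial of a `k × l` partial permutation,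
evaluated in alphabets of sizes `k'` and `l'`:
`lim_{m → ∞} G_{m+w}(z_{k'}/ż_{l'})`, the (eventually constant) limit of the double
Grothendieck polynomials of `m + w` with all variables beyond the first `k'` (resp.
`l'`) set equal to `1`. -/
noncomputable def stableTruncPP (k l k' l' : ℕ) (rel : ℕ → ℕ → Prop) : GR :=
  Classical.epsilon fun g => ∃ M, ∀ m, M ≤ m →
    truncAlph k' l' (GrothPerm (minComp (m + k) (m + l) (shiftRel m rel))) = g

/-- `Ĝ_w(z_k/ż_l)` for a `k × l` partial permutation `w`. -/
noncomputable def stableGrothPP (k l : ℕ) (rel : ℕ → ℕ → Prop) : GR :=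
  stableTruncPP k l k l rel

/-- `Ĝ_μ(z_{k'}/ż_{l'})` for a (finitely supported) permutation `μ`. -/
noncomputable def stableTruncPerm (k' l' : ℕ) (μ : Equiv.Perm ℕ) : GR :=
  Classical.epsilon fun g => ∃ M, ∀ m, M ≤ m →
    truncAlph k' l' (GrothPerm (shiftPerm m μ)) = g

/-- `Ĝ_w(x/ȳ) = Ĝ_{w_1}(x^0/y^1) ⋯ Ĝ_{w_n}(x^{n-1}/y^n)` for a lacing diagram. -/
noncomputable def GhatLacing (n : ℕ) (r : ℕ → ℕ) (L : ℕ → ℕ → ℕ → Prop) : GR :=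
  ∏ j ∈ Finset.Icc 1 n, placeBlock n r j (stableGrothPP (r (j - 1)) (r j) (L j))

/-- A (finitely supported) permutation is grassmannian if it has at most one descent. -/
def IsGrassmannian (μ : Equiv.Perm ℕ) : Prop :=
  (∃ N, ∀ i, N ≤ i → μ i = i) ∧ ∀ i i', μ (i + 1) < μ i → μ (i' + 1) < μ i' → i = i'

/-- Grassmannian lacing diagrams: those whose minimal completions are all grassmannian. -/
def GrassLacingSet (n : ℕ) (r : ℕ → ℕ) : Set (ℕ → ℕ → ℕ → Prop) :=
  {M | IsLacingDiagram n r M ∧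
    ∀ j, 1 ≤ j → j ≤ n → IsGrassmannian (minComp (r (j - 1)) (r j) (M j))}

/-! ### Pipes, top pipe dreams and absorbable elbows -/

/-- One step of a pipe through the tiling determined by `P` in a grid with `l` columns.
A state is `(i, j, fromW)`: the pipe is at tile `(i, j)`, having entered from the west
(`fromW = true`) or from the south (`fromW = false`).  At a crossing the pipe goes
straight; at an elbow it turns (west ↝ north, south ↝ east).  Pipes move only north
and east; `none` means the pipe exits the grid. -/
def nextState (l : ℕ) (P : PD) : ℕ × ℕ × Bool → Option (ℕ × ℕ × Bool) := fun s =>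
  let i := s.1
  let j := s.2.1
  let fromW := s.2.2
  if ((i, j) ∈ P ∧ fromW = true) ∨ ((i, j) ∉ P ∧ fromW = false) then
    -- exit east
    if j + 1 < l then some (i, j + 1, true) else none
  else
    -- exit north
    if 0 < i then some (i - 1, j, false) else none

/-- The (fuelled) forward trajectory of a pipe from a given state. -/
noncomputable def traj (l : ℕ) (P : PD) : ℕ → ℕ × ℕ × Bool → List (ℕ × ℕ × Bool)
  | 0, s => [s]
  | fuel + 1, s =>
    s :: (match nextState l P s with
      | none => []
      | some s' => traj l P fuel s')

/-- The pipe of `P` moving forward from state `s` passes through the tile `c`. -/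
def passesThrough (k l : ℕ) (P : PD) (s : ℕ × ℕ × Bool) (c : ℕ × ℕ) : Prop :=
  ∃ st ∈ traj l P (k + l + 2) s, (st.1, st.2.1) = c

/-- An elbow tile `e` of the pipe dream `D` (in the `k × l` grid) is absorbable if the
two pipes passing through it cross in a crossing tile (necessarily to its northeast). -/
def Absorbable (k l : ℕ) (D : PD) (e : ℕ × ℕ) : Prop :=
  e.1 < k ∧ e.2 < l ∧ e ∉ D ∧
  ∃ c ∈ D, passesThrough k l D (e.1, e.2, true) c ∧ passesThrough k l D (e.1, e.2, false) c

/-- `D` is the top pipe dream of the `k × l` partial permutation `rel`: the unique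
reduced pipe dream for `rel` having no elbow tile due north of a crossing tile. -/
def IsTopPipeDream (k l : ℕ) (rel : ℕ → ℕ → Prop) (D : PD) : Prop :=
  PipeDreamsFor k l rel D ∧ D.card = clen (minComp k l rel) ∧
  ∀ i i' j, i < i' → (i', j) ∈ D → (i, j) ∈ D

/-- `α|P`: add `α` columns of crossing tiles on the left side of the `k × l`
pipe dream `P`. -/
def addCols (k α : ℕ) (P : PD) : PD :=
  (Finset.range k ×ˢ Finset.range α) ∪ P.image fun pq => (pq.1, pq.2 + α)

/-! ### The 0-Hecke monoid -/

def FixesFrom (N : ℕ) (w : Equiv.Perm ℕ) : Prop := ∀ x, N ≤ x → w x = x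

def EventuallyFixed (w : Equiv.Perm ℕ) : Prop := ∃ N, FixesFrom N w

def inversions (w : Equiv.Perm ℕ) : Set (ℕ × ℕ) := {pq | pq.1 < pq.2 ∧ w pq.2 < w pq.1}

lemma sGen_apply (i x : ℕ) : sGen i x = if x = i then i + 1 else if x = i + 1 then i else x := by
  simp [sGen, Equiv.swap_apply_def]

lemma sGen_inv (i : ℕ) : (sGen i)⁻¹ = sGen i := Equiv.swap_inv _ _

lemma sGen_symm (i : ℕ) : (sGen i).symm = sGen i := Equiv.symm_swap _ _

lemma sGen_mul_self (i : ℕ) : sGen i * sGen i = 1 := Equiv.swap_mul_self _ _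

lemma sGen_lt_sGen_iff {i a b : ℕ} (h : ¬(a = i ∧ b = i + 1)) (h' : ¬(a = i + 1 ∧ b = i)) :
    sGen i a < sGen i b ↔ a < b := by
  rw [sGen_apply, sGen_apply]
  split_ifs <;> omega

lemma fixesFrom_sGen (i : ℕ) : FixesFrom (i + 2) (sGen i) := fun x hx => by
  rw [sGen_apply]; split_ifs <;> omega

namespace FixesFrom

variable {N : ℕ} {w v : Equiv.Perm ℕ}

lemma mono {M : ℕ} (h : FixesFrom N w) (hNM : N ≤ M) : FixesFrom M w :=
  fun x hx => h x (hNM.trans hx)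

lemma mul (hw : FixesFrom N w) (hv : FixesFrom N v) : FixesFrom N (w * v) := fun x hx => by
  rw [Equiv.Perm.mul_apply, hv x hx, hw x hx]

lemma inv (h : FixesFrom N w) : FixesFrom N w⁻¹ := fun x hx => by
  rw [Equiv.Perm.inv_eq_iff_eq, h x hx]

lemma apply_lt (h : FixesFrom N w) {x : ℕ} (hx : x < N) : w x < N := by
  by_contra! hge
  have := w.injective (h _ hge)
  omega

lemma inversions_finite (h : FixesFrom N w) : (inversions w).Finite := by
  refine (Finset.range N ×ˢ Finset.range N).finite_toSet.subset ?_
  rintro ⟨p, q⟩ ⟨hpq, hinv⟩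
  dsimp only at hpq hinv
  simp only [Finset.coe_product, Set.mem_prod, Finset.coe_range, Set.mem_Iio]
  have hq : q < N := by
    by_contra! hq
    rw [h q hq] at hinv
    by_cases hp : p < N
    · have := h.apply_lt hp
      omega
    · rw [h p (by omega)] at hinv
      omega
  omega

end FixesFrom

namespace EventuallyFixed

variable {w v : Equiv.Perm ℕ}

lemma one : EventuallyFixed 1 := ⟨0, fun _ _ => rfl⟩

lemma sGen (i : ℕ) : EventuallyFixed (sGen i) := ⟨i + 2, fixesFrom_sGen i⟩

lemma mul (hw : EventuallyFixed w) (hv : EventuallyFixed v) : EventuallyFixed (w * v) := by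
  obtain ⟨N, hN⟩ := hw
  obtain ⟨M, hM⟩ := hv
  exact ⟨max N M, (hN.mono (le_max_left N M)).mul (hM.mono (le_max_right N M))⟩

lemma inv (hw : EventuallyFixed w) : EventuallyFixed w⁻¹ :=
  let ⟨N, hN⟩ := hw; ⟨N, hN.inv⟩

end EventuallyFixed

lemma inversions_mul_sGen {w : Equiv.Perm ℕ} {j : ℕ} (h : w j < w (j + 1)) :
    inversions (w * sGen j) =
      insert (j, j + 1) (Equiv.prodCongr (sGen j) (sGen j) '' inversions w) := by
  ext ⟨p, q⟩
  rw [Set.mem_insert_iff, Equiv.image_eq_preimage_symm]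
  simp only [inversions, Set.mem_ofPred_eq, Set.mem_preimage, Equiv.prodCongr_symm, sGen_symm,
    Equiv.prodCongr_apply, Prod.map, Prod.mk.injEq, Equiv.Perm.mul_apply]
  rw [sGen_apply j p, sGen_apply j q]
  split_ifs <;> subst_vars <;> omega

lemma clen_mul_sGen {w : Equiv.Perm ℕ} (hw : EventuallyFixed w) {j : ℕ} (h : w j < w (j + 1)) :
    clen (w * sGen j) = clen w + 1 := by
  obtain ⟨N, hN⟩ := hw
  have hnotMem : (j, j + 1) ∉ Equiv.prodCongr (sGen j) (sGen j) '' inversions w := by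
    rintro ⟨⟨p, q⟩, ⟨hpq, -⟩, heq⟩
    simp only [Equiv.prodCongr_apply, Prod.map, Prod.mk.injEq, sGen_apply] at heq
    split_ifs at heq <;> omega
  change (inversions (w * sGen j)).ncard = (inversions w).ncard + 1
  rw [inversions_mul_sGen h, Set.ncard_insert_of_notMem hnotMem
      ((hN.inversions_finite).image _),
    Set.ncard_image_of_injective _ (Equiv.injective _)]

lemma demStep_eq {w : Equiv.Perm ℕ} (hw : EventuallyFixed w) (j : ℕ) :
    demStep w j = if w j < w (j + 1) then w * sGen j else w := by
  unfold demStep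
  by_cases h : w j < w (j + 1)
  · rw [if_pos h, if_pos (by rw [clen_mul_sGen hw h]; omega)]
  · have hne : w j ≠ w (j + 1) := fun h' => by have := w.injective h'; omega
    have h' : (w * sGen j) j < (w * sGen j) (j + 1) := by
      simp only [Equiv.Perm.mul_apply, sGen_apply, if_pos, if_neg (Nat.succ_ne_self j)]
      omega
    have hlen := clen_mul_sGen (hw.mul (.sGen j)) h'
    rw [mul_assoc, sGen_mul_self, mul_one] at hlen
    rw [if_neg h, if_neg (by omega)]

lemma EventuallyFixed.demStep {w : Equiv.Perm ℕ} (hw : EventuallyFixed w) (j : ℕ) :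
    EventuallyFixed (demStep w j) := by
  rw [demStep_eq hw]
  split_ifs
  exacts [hw.mul (.sGen j), hw]

lemma EventuallyFixed.foldl_demStep {w : Equiv.Perm ℕ} (hw : EventuallyFixed w) (W : List ℕ) :
    EventuallyFixed (W.foldl _root_.demStep w) := by
  induction W generalizing w with
  | nil => exact hw
  | cons a W ih => exact ih (hw.demStep a)

/-- Left multiplication by `s_i` in the 0-Hecke monoid, mirroring `demStep`. -/
def lStep (i : ℕ) (w : Equiv.Perm ℕ) : Equiv.Perm ℕ :=
  if w⁻¹ i < w⁻¹ (i + 1) then sGen i * w else w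

lemma lStep_one (i : ℕ) : lStep i 1 = sGen i := by
  rw [lStep, inv_one, if_pos (by simp), mul_one]

lemma demStep_one (i : ℕ) : demStep 1 i = sGen i := by
  rw [demStep_eq .one, if_pos (by simp), one_mul]

lemma demStep_inv {w : Equiv.Perm ℕ} (hw : EventuallyFixed w) (i : ℕ) :
    demStep w⁻¹ i = (lStep i w)⁻¹ := by
  rw [demStep_eq hw.inv, lStep, apply_ite (·⁻¹), mul_inv_rev, sGen_inv]

lemma demStep_sGen_mul {u : Equiv.Perm ℕ} (hu : EventuallyFixed u) (i j : ℕ) :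
    demStep (sGen i * u) j =
      if sGen i (u j) < sGen i (u (j + 1)) then sGen i * u * sGen j else sGen i * u :=
  demStep_eq ((EventuallyFixed.sGen i).mul hu) j

lemma lStep_mul_sGen (u : Equiv.Perm ℕ) (i j : ℕ) :
    lStep i (u * sGen j) = if sGen j (u⁻¹ i) < sGen j (u⁻¹ (i + 1))
      then sGen i * (u * sGen j) else u * sGen j := by
  simp only [lStep, mul_inv_rev, sGen_inv, Equiv.Perm.mul_apply]

lemma demStep_lStep {u : Equiv.Perm ℕ} (hu : EventuallyFixed u) (i j : ℕ) :
    demStep (lStep i u) j = lStep i (demStep u j) := by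
  obtain ⟨x, hxi⟩ : ∃ x, u⁻¹ i = x := ⟨_, rfl⟩
  obtain ⟨y, hyi⟩ : ∃ y, u⁻¹ (i + 1) = y := ⟨_, rfl⟩
  have hx : u x = i := by rw [← hxi]; exact u.apply_symm_apply i
  have hy : u y = i + 1 := by rw [← hyi]; exact u.apply_symm_apply (i + 1)
  -- `s_i` and `s_j` only interact when `u` maps `{j, j + 1}` onto `{i, i + 1}`
  have h₁ : u j = i ∧ u (j + 1) = i + 1 ↔ x = j ∧ y = j + 1 := by
    refine ⟨fun ⟨h, h'⟩ =>
      ⟨u.injective (hx.trans h.symm), u.injective (hy.trans h'.symm)⟩, ?_⟩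
    rintro ⟨rfl, rfl⟩
    exact ⟨hx, hy⟩
  have h₂ : u j = i + 1 ∧ u (j + 1) = i ↔ x = j + 1 ∧ y = j := by
    refine ⟨fun ⟨h, h'⟩ =>
      ⟨u.injective (hx.trans h'.symm), u.injective (hy.trans h.symm)⟩, ?_⟩
    rintro ⟨rfl, rfl⟩
    exact ⟨hy, hx⟩
  have hL : lStep i u = if x < y then sGen i * u else u := by rw [lStep, hxi, hyi]
  rw [hL, demStep_eq hu j]
  by_cases c₁ : x < y <;> by_cases c₂ : u j < u (j + 1) <;>
    simp only [c₁, c₂, ↓reduceIte, demStep_sGen_mul hu, lStep_mul_sGen, hxi, hyi, hL,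
      demStep_eq hu j]
  · by_cases hs : u j = i ∧ u (j + 1) = i + 1
    · have hsi : sGen i = Equiv.swap (u j) (u (j + 1)) := by rw [hs.1, hs.2, sGen]
      have hcomm : sGen i * u = u * sGen j := by
        rw [hsi, Equiv.swap_apply_apply, sGen, inv_mul_cancel_right]
      obtain ⟨rfl, rfl⟩ := h₁.mp hs
      simp [hs, sGen_apply, hcomm]
    · simp only [sGen_lt_sGen_iff (i := i) hs (by omega),
        sGen_lt_sGen_iff (i := j) (a := x) (b := y) (by rwa [← h₁]) (by omega),
        c₁, c₂, ↓reduceIte, mul_assoc]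
  · simp only [sGen_lt_sGen_iff (i := i) (a := u j) (b := u (j + 1)) (by omega)
      (by rw [h₂]; omega), c₂, ↓reduceIte]
  · simp only [sGen_lt_sGen_iff (i := j) (a := x) (b := y) (by rw [← h₁]; omega)
      (by rw [← h₂]; omega), c₁, ↓reduceIte]

lemma foldl_demStep_lStep {u : Equiv.Perm ℕ} (hu : EventuallyFixed u) (i : ℕ) (W : List ℕ) :
    W.foldl demStep (lStep i u) = lStep i (W.foldl demStep u) := by
  induction W generalizing u with
  | nil => rfl
  | cons a W ih => rw [List.foldl_cons, demStep_lStep hu, ih (hu.demStep a), List.foldl_cons]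

lemma eventuallyFixed_demWord (W : List ℕ) : EventuallyFixed (demWord W) :=
  EventuallyFixed.one.foldl_demStep W

lemma demWord_cons (a : ℕ) (W : List ℕ) : demWord (a :: W) = lStep a (demWord W) := by
  rw [demWord, List.foldl_cons, demStep_one, ← lStep_one, foldl_demStep_lStep .one]
  rfl

lemma demWord_append (A B : List ℕ) : demWord (A ++ B) = B.foldl demStep (demWord A) :=
  List.foldl_append

lemma demWord_append_eq_foldr (A B : List ℕ) : demWord (A ++ B) = A.foldr lStep (demWord B) := by
  induction A with
  | nil => rfl
  | cons a A ih => rw [List.cons_append, demWord_cons, ih, List.foldr_cons]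

lemma demWord_append_congr {A A' B B' : List ℕ} (hA : demWord A = demWord A')
    (hB : demWord B = demWord B') : demWord (A ++ B) = demWord (A' ++ B') := by
  rw [demWord_append, hA, ← demWord_append, demWord_append_eq_foldr, hB,
    ← demWord_append_eq_foldr]

lemma demWord_flatMap_congr {ι : Type*} {g g' : ι → List ℕ} {s : List ι}
    (h : ∀ j ∈ s, demWord (g j) = demWord (g' j)) :
    demWord (s.flatMap g) = demWord (s.flatMap g') := by
  induction s with
  | nil => rfl
  | cons j s ih =>
    simp only [List.flatMap_cons]
    exact demWord_append_congr (h j List.mem_cons_self)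
      (ih fun x hx => h x (List.mem_cons_of_mem j hx))

lemma demWord_reverse (W : List ℕ) : demWord W.reverse = (demWord W)⁻¹ := by
  induction W with
  | nil => simp [demWord]
  | cons a W ih =>
    rw [List.reverse_cons, demWord_append, ih, demWord_cons]
    exact demStep_inv (eventuallyFixed_demWord W) a

lemma demWord_pair_comm {a b : ℕ} (h : a + 2 ≤ b ∨ b + 2 ≤ a) :
    demWord [a, b] = demWord [b, a] := by
  have hab : ∀ a b, a + 2 ≤ b ∨ b + 2 ≤ a → demWord [a, b] = sGen a * sGen b := by
    intro a b h
    simp only [demWord, List.foldl_cons, List.foldl_nil, demStep_one,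
      demStep_eq (EventuallyFixed.sGen a), sGen_apply]
    rw [if_pos (by split_ifs <;> omega)]
  rw [hab a b h, hab b a h.symm]
  ext x
  simp only [Equiv.Perm.mul_apply, sGen_apply]
  split_ifs <;> omega

lemma demWord_cons_comm {a : ℕ} {W : List ℕ} (h : ∀ b ∈ W, a + 2 ≤ b ∨ b + 2 ≤ a) :
    demWord (a :: W) = demWord (W ++ [a]) := by
  induction W with
  | nil => rfl
  | cons b W ih =>
    calc demWord ([a, b] ++ W) = demWord ([b, a] ++ W) :=
          demWord_append_congr (demWord_pair_comm (h b List.mem_cons_self)) rfl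
      _ = demWord ([b] ++ (a :: W)) := rfl
      _ = demWord ([b] ++ (W ++ [a])) :=
          demWord_append_congr rfl (ih fun c hc => h c (List.mem_cons_of_mem b hc))
      _ = demWord ((b :: W) ++ [a]) := rfl

lemma demWord_append_comm {A B : List ℕ}
    (h : ∀ a ∈ A, ∀ b ∈ B, a + 2 ≤ b ∨ b + 2 ≤ a) :
    demWord (A ++ B) = demWord (B ++ A) := by
  induction A with
  | nil => simp
  | cons a A ih =>
    calc demWord ([a] ++ (A ++ B)) = demWord ([a] ++ (B ++ A)) :=
          demWord_append_congr rfl (ih fun c hc => h c (List.mem_cons_of_mem a hc))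
      _ = demWord ((a :: B) ++ A) := rfl
      _ = demWord ((B ++ [a]) ++ A) :=
          demWord_append_congr (demWord_cons_comm (h a List.mem_cons_self)) rfl
      _ = demWord (B ++ a :: A) := by simp

lemma demWord_flatMap_append {X F : ℕ → List ℕ} {m : ℕ}
    (h : ∀ a b, a < b → b < m → ∀ x ∈ F a, ∀ y ∈ X b, x + 2 ≤ y ∨ y + 2 ≤ x) :
    demWord ((List.range m).flatMap fun a => X a ++ F a) =
      demWord ((List.range m).flatMap X ++ (List.range m).flatMap F) := by
  induction m with
  | zero => rfl
  | succ m ih =>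
    simp only [List.range_succ, List.flatMap_append, List.flatMap_singleton]
    have hcomm : demWord ((List.range m).flatMap F ++ X m) =
        demWord (X m ++ (List.range m).flatMap F) := by
      refine demWord_append_comm fun x hx y hy => ?_
      obtain ⟨a, ha, hxa⟩ := List.mem_flatMap.mp hx
      exact h a m (List.mem_range.mp ha) (by omega) x hxa y hy
    calc _ = demWord (((List.range m).flatMap X ++ (List.range m).flatMap F) ++ (X m ++ F m)) :=
          demWord_append_congr (ih fun a b hab hb => h a b hab (by omega)) rfl
      _ = demWord ((List.range m).flatMap X ++ (((List.range m).flatMap F ++ X m) ++ F m)) := by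
          simp only [List.append_assoc]
      _ = demWord ((List.range m).flatMap X ++ ((X m ++ (List.range m).flatMap F) ++ F m)) :=
          demWord_append_congr rfl (demWord_append_congr hcomm rfl)
      _ = _ := by simp only [List.append_assoc]

section Shift

variable (m : ℕ)

lemma shiftPerm_apply_add (u : Equiv.Perm ℕ) (x : ℕ) : shiftPerm m u (m + x) = m + u x :=
  Equiv.Perm.viaEmbedding_apply u _ x

lemma shiftPerm_apply_of_lt (u : Equiv.Perm ℕ) {x : ℕ} (hx : x < m) : shiftPerm m u x = x :=
  Equiv.Perm.viaEmbedding_apply_of_notMem _ _ _ fun ⟨y, hy⟩ => by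
    simp only [Function.Embedding.coeFn_mk] at hy
    omega

lemma shiftPerm_mul (u v : Equiv.Perm ℕ) :
    shiftPerm m (u * v) = shiftPerm m u * shiftPerm m v :=
  map_mul (Equiv.Perm.viaEmbeddingHom ⟨(m + ·), add_right_injective m⟩) u v

lemma shiftPerm_one : shiftPerm m 1 = 1 :=
  map_one (Equiv.Perm.viaEmbeddingHom ⟨(m + ·), add_right_injective m⟩)

lemma shiftPerm_sGen (a : ℕ) : shiftPerm m (sGen a) = sGen (m + a) := by
  ext x
  by_cases hx : x < m
  · rw [shiftPerm_apply_of_lt m _ hx, sGen_apply, if_neg (by omega), if_neg (by omega)]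
  · obtain ⟨y, rfl⟩ := Nat.exists_eq_add_of_le (not_lt.mp hx)
    rw [shiftPerm_apply_add, sGen_apply, sGen_apply]
    split_ifs <;> omega

lemma EventuallyFixed.shiftPerm {u : Equiv.Perm ℕ} (hu : EventuallyFixed u) :
    EventuallyFixed (shiftPerm m u) := by
  obtain ⟨N, hN⟩ := hu
  refine ⟨m + N, fun x hx => ?_⟩
  obtain ⟨y, rfl⟩ := Nat.exists_eq_add_of_le (show m ≤ x by omega)
  rw [shiftPerm_apply_add, hN y (by omega)]

lemma demStep_shiftPerm {u : Equiv.Perm ℕ} (hu : EventuallyFixed u) (a : ℕ) :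
    demStep (shiftPerm m u) (m + a) = shiftPerm m (demStep u a) := by
  rw [demStep_eq (hu.shiftPerm m), demStep_eq hu, add_assoc, shiftPerm_apply_add,
    shiftPerm_apply_add, ← shiftPerm_sGen, ← shiftPerm_mul]
  simp only [add_lt_add_iff_left, apply_ite (shiftPerm m)]

lemma demWord_map_add (W : List ℕ) :
    demWord (W.map (m + ·)) = shiftPerm m (demWord W) := by
  suffices ∀ u, EventuallyFixed u →
      (W.map (m + ·)).foldl demStep (shiftPerm m u) = shiftPerm m (W.foldl demStep u) by
    simpa [demWord, shiftPerm_one] using this 1 .one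
  induction W with
  | nil => exact fun _ _ => rfl
  | cons a W ih =>
    intro u hu
    rw [List.map_cons, List.foldl_cons, demStep_shiftPerm m hu, ih _ (hu.demStep a),
      List.foldl_cons]

end Shift

section LongestElement

variable {m : ℕ}

lemma w0_apply (m x : ℕ) : w0 m x = if x < m then m - 1 - x else x := rfl

lemma w0_mul_self (m : ℕ) : w0 m * w0 m = 1 := by
  ext x
  simp only [Equiv.Perm.mul_apply, w0_apply, Equiv.Perm.one_apply]
  split_ifs <;> omega

lemma fixesFrom_w0 (m : ℕ) : FixesFrom m (w0 m) := fun x hx => by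
  rw [w0_apply, if_neg (by omega)]

lemma w0_mul_sGen_mul_w0 {a : ℕ} (ha : a + 2 ≤ m) :
    w0 m * sGen a * w0 m = sGen (m - 2 - a) := by
  ext x
  simp only [Equiv.Perm.mul_apply, w0_apply, sGen_apply]
  split_ifs <;> omega

lemma FixesFrom.demStep {u : Equiv.Perm ℕ} (hu : FixesFrom m u) {a : ℕ} (ha : a + 2 ≤ m) :
    FixesFrom m (demStep u a) := by
  rw [demStep_eq ⟨m, hu⟩]
  split_ifs
  exacts [hu.mul ((fixesFrom_sGen a).mono ha), hu]

lemma demStep_w0_conj {u : Equiv.Perm ℕ} (hu : FixesFrom m u) {a : ℕ} (ha : a + 2 ≤ m) :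
    demStep (w0 m * u * w0 m) (m - 2 - a) = w0 m * demStep u a * w0 m := by
  have hconj : FixesFrom m (w0 m * u * w0 m) := ((fixesFrom_w0 m).mul hu).mul (fixesFrom_w0 m)
  have hlt := hu.apply_lt (show a < m by omega)
  have hlt' := hu.apply_lt (show a + 1 < m by omega)
  have e₁ : (w0 m * u * w0 m) (m - 2 - a) = m - 1 - u (a + 1) := by
    rw [Equiv.Perm.mul_apply, Equiv.Perm.mul_apply, w0_apply _ (m - 2 - a), if_pos (by omega),
      show m - 1 - (m - 2 - a) = a + 1 by omega, w0_apply, if_pos hlt']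
  have e₂ : (w0 m * u * w0 m) (m - 2 - a + 1) = m - 1 - u a := by
    rw [Equiv.Perm.mul_apply, Equiv.Perm.mul_apply, w0_apply _ (m - 2 - a + 1),
      if_pos (by omega), show m - 1 - (m - 2 - a + 1) = a by omega, w0_apply, if_pos hlt]
  have hs : w0 m * sGen (m - 2 - a) * w0 m = sGen a := by
    rw [w0_mul_sGen_mul_w0 (by omega), show m - 2 - (m - 2 - a) = a by omega]
  rw [demStep_eq ⟨m, hconj⟩, demStep_eq ⟨m, hu⟩, e₁, e₂]
  by_cases h : u a < u (a + 1)
  · rw [if_pos (by omega), if_pos h, ← hs]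
    simp only [mul_assoc, w0_mul_self, mul_one]
  · rw [if_neg (by omega), if_neg h]

lemma demWord_map_tsub {W : List ℕ} (hW : ∀ a ∈ W, a + 2 ≤ m) :
    demWord (W.map (m - 2 - ·)) = w0 m * demWord W * w0 m := by
  suffices ∀ u, FixesFrom m u →
      (W.map (m - 2 - ·)).foldl demStep (w0 m * u * w0 m) = w0 m * W.foldl demStep u * w0 m by
    simpa [demWord, w0_mul_self] using this 1 fun _ _ => rfl
  induction W with
  | nil => exact fun _ _ => rfl
  | cons a W ih =>
    intro u hu
    have ha := hW a List.mem_cons_self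
    rw [List.map_cons, List.foldl_cons, demStep_w0_conj hu ha,
      ih (fun b hb => hW b (List.mem_cons_of_mem a hb)) _ (hu.demStep ha), List.foldl_cons]

end LongestElement

/-! ### Rotating pipe dreams -/

lemma reverse_range_eq_map (n : ℕ) :
    (List.range n).reverse = (List.range n).map (n - 1 - ·) := by
  rw [List.range_eq_range', List.reverse_range', zero_add, ← List.range_eq_range']

def rowWord (l : ℕ) (P : PD) (i : ℕ) : List ℕ :=
  (List.range l).reverse.filterMap fun j => if (i, j) ∈ P then some (i + j) else none

lemma pdWord_eq_flatMap_rowWord (k l : ℕ) (P : PD) :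
    pdWord k l P = (List.range k).flatMap (rowWord l P) := by
  simp only [pdWord, posList, List.map_flatMap, List.map_filterMap]
  refine List.flatMap_congr fun i _ => List.filterMap_congr fun j _ => ?_
  split_ifs <;> rfl

lemma le_of_mem_pdWord {k l : ℕ} {P : PD} (hP : InGrid k l P) {x : ℕ}
    (hx : x ∈ pdWord k l P) : x + 2 ≤ k + l := by
  simp only [pdWord, posList, List.mem_map, List.mem_flatMap, List.mem_filterMap] at hx
  obtain ⟨_, ⟨i, -, j, -, hij⟩, rfl⟩ := hx
  split_ifs at hij with hmem
  cases hij
  have := hP _ hmem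
  omega

lemma mem_rot180 {k l : ℕ} {P : PD} (hP : InGrid k l P) {x y : ℕ} (hx : x < k) (hy : y < l) :
    (x, y) ∈ rot180 k l P ↔ (k - 1 - x, l - 1 - y) ∈ P := by
  simp only [rot180, Finset.mem_image, Prod.ext_iff]
  constructor
  · rintro ⟨⟨a, b⟩, hab, rfl, rfl⟩
    have := hP _ hab
    rwa [show k - 1 - (k - 1 - a) = a by omega, show l - 1 - (l - 1 - b) = b by omega]
  · exact fun h => ⟨_, h, by omega, by omega⟩

lemma rowWord_rot180 {k l : ℕ} {P : PD} (hP : InGrid k l P) {i : ℕ} (hi : i < k) :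
    rowWord l (rot180 k l P) i = ((rowWord l P (k - 1 - i)).map (k + l - 2 - ·)).reverse := by
  rw [rowWord, rowWord, ← List.reverse_inj, List.reverse_reverse, List.filterMap_reverse,
    List.reverse_reverse, List.map_filterMap, reverse_range_eq_map, List.filterMap_map]
  refine List.filterMap_congr fun j hj => ?_
  rw [List.mem_range] at hj
  simp only [Function.comp_apply, mem_rot180 hP hi hj]
  split_ifs
  · simp only [Option.map_some, Option.some.injEq]
    omega
  · rfl

lemma pdWord_rot180 {k l : ℕ} {P : PD} (hP : InGrid k l P) :
    pdWord k l (rot180 k l P) = ((pdWord k l P).map (k + l - 2 - ·)).reverse := by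
  rw [pdWord_eq_flatMap_rowWord, pdWord_eq_flatMap_rowWord, List.map_flatMap,
    List.reverse_flatMap, reverse_range_eq_map, List.flatMap_map]
  refine List.flatMap_congr fun i hi => ?_
  rw [List.mem_range] at hi
  rw [rowWord_rot180 hP hi, Function.comp_apply]

lemma pdDelta_rot180 {k l : ℕ} {P : PD} (hP : InGrid k l P) :
    pdDelta k l (rot180 k l P) = w0 (k + l) * (pdDelta k l P)⁻¹ * w0 (k + l) := by
  rw [pdDelta, pdWord_rot180 hP, demWord_reverse, demWord_map_tsub fun _ => le_of_mem_pdWord hP,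
    pdDelta]
  simp only [mul_inv_rev, ← mul_assoc, inv_eq_of_mul_eq_one_left (w0_mul_self _)]

lemma pdDelta_eq_of_pdDelta_rot180_eq {k l : ℕ} {P P' : PD} (hP : InGrid k l P)
    (hP' : InGrid k l P') (h : pdDelta k l (rot180 k l P) = pdDelta k l (rot180 k l P')) :
    pdDelta k l P = pdDelta k l P' := by
  rwa [pdDelta_rot180 hP, pdDelta_rot180 hP', mul_left_inj, mul_right_inj, inv_inj] at h

lemma le_of_mem_rowWord {l i x : ℕ} {P : PD} (hx : x ∈ rowWord l P i) : i ≤ x := by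
  simp only [rowWord, List.mem_filterMap] at hx
  obtain ⟨j, -, hj⟩ := hx
  split_ifs at hj
  cases hj
  omega

/-! ### The pipe dream `P(P_1, …, P_n)` -/

section Assemble

variable {n : ℕ} {r : ℕ → ℕ}

lemma rowSum_succ (r : ℕ → ℕ) (j : ℕ) : rowSum r (j + 1) = rowSum r j + r j :=
  Finset.sum_range_succ r j

lemma rowSum_mono (r : ℕ → ℕ) : Monotone (rowSum r) := fun _ _ h =>
  Finset.sum_le_sum_of_subset (Finset.range_subset_range.mpr h)

lemma rowSum_le_dTot {j : ℕ} (hj : j ≤ n + 1) : rowSum r j ≤ dTot n r := rowSum_mono r hj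

lemma exists_inBlockRow {m p : ℕ} (hp : p < rowSum r m) : ∃ j < m, InBlockRow r j p := by
  induction m with
  | zero => simp [rowSum] at hp
  | succ m ih =>
    by_cases h : p < rowSum r m
    · obtain ⟨j, hj, hrow⟩ := ih h
      exact ⟨j, by omega, hrow⟩
    · exact ⟨m, by omega, by omega, hp⟩

lemma exists_inBlockCol {q : ℕ} (hq : q < dTot n r) : ∃ i ≤ n, InBlockCol n r i q := by
  have hd : dTot n r = rowSum r (n + 1) := rfl
  obtain ⟨i, hi, h₁, h₂⟩ := exists_inBlockRow (r := r) (m := n + 1) (p := dTot n r - 1 - q)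
    (by omega)
  exact ⟨i, by omega, by unfold InBlockCol; omega⟩

lemma InBlockRow.eq {j j' a : ℕ} (h : InBlockRow r j' (rowSum r j + a)) (ha : a < r j) :
    j' = j := by
  obtain ⟨h₁, h₂⟩ := h
  have := rowSum_succ r j
  rcases lt_trichotomy j' j with hlt | heq | hgt
  · have := rowSum_mono r (show j' + 1 ≤ j by omega)
    omega
  · exact heq
  · have := rowSum_mono r (show j + 1 ≤ j' by omega)
    omega

/-- Block row `j < n` of `P(P_1, …, P_n)` consists of `fillWidth n r j` crossing tiles followed
by the block `P (j + 1)`. -/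
def fillWidth (n : ℕ) (r : ℕ → ℕ) (j : ℕ) : ℕ := dTot n r - rowSum r (j + 2)

lemma rowSum_add_lt_dTot {j a : ℕ} (hj : j ≤ n) (ha : a < r j) : rowSum r j + a < dTot n r := by
  have := rowSum_succ r j
  have := rowSum_le_dTot (n := n) (r := r) (show j + 1 ≤ n + 1 by omega)
  omega

lemma mem_assemble_of_lt_fillWidth {P : ℕ → PD} {j a q : ℕ} (hj : j < n) (ha : a < r j)
    (hq : q < fillWidth n r j) : (rowSum r j + a, q) ∈ assemble n r P := by
  have hqd : q < dTot n r := by unfold fillWidth at hq; omega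
  obtain ⟨i, hi, hcol⟩ := exists_inBlockCol hqd
  simp only [assemble, Finset.mem_filter, Finset.mem_product, Finset.mem_range]
  refine ⟨⟨rowSum_add_lt_dTot hj.le ha, hqd⟩, Or.inl ⟨j, hj.le, i, hi, ?_, hcol, ?_⟩⟩
  · exact ⟨by omega, by rw [rowSum_succ]; omega⟩
  · by_contra! hij
    have := rowSum_mono r (show i + 1 ≤ j + 2 by omega)
    unfold fillWidth at hq
    have := hcol.1
    omega

lemma mem_assemble_fillWidth_add_iff {P : ℕ → PD} {j a b : ℕ} (hj : j < n) (ha : a < r j)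
    (hb : b < r (j + 1)) :
    (rowSum r j + a, fillWidth n r j + b) ∈ assemble n r P ↔ (a, b) ∈ P (j + 1) := by
  have h₁ := rowSum_succ r (j + 1)
  have h₂ := rowSum_le_dTot (n := n) (r := r) (show j + 2 ≤ n + 1 by omega)
  simp only [assemble, Finset.mem_filter, Finset.mem_product, Finset.mem_range, fillWidth]
  have h₃ : rowSum r (j + 1 + 1) = rowSum r (j + 2) := rfl
  constructor
  · rintro ⟨-, ⟨j', -, i, -, hrow, hcol, hij⟩ | ⟨j', hj', -, hrow, hcol, hmem⟩⟩
    · obtain rfl := hrow.eq ha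
      have := rowSum_mono r hij
      have := hcol.2
      omega
    · obtain rfl : j' = j + 1 := by have := hrow.eq ha; omega
      simpa [show dTot n r - rowSum r (j + 2) + b - (dTot n r - rowSum r (j + 2)) = b by omega]
        using hmem
  · intro hmem
    refine ⟨⟨rowSum_add_lt_dTot hj.le ha, by omega⟩,
      Or.inr ⟨j + 1, by omega, by omega, ?_, ?_, ?_⟩⟩
    · exact ⟨by simp, by rw [Nat.add_sub_cancel, rowSum_succ]; omega⟩
    · exact ⟨by omega, by omega⟩
    · simpa using hmem

lemma notMem_assemble {P : ℕ → PD} {j a q : ℕ} (ha : a < r j)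
    (hq : dTot n r - rowSum r (j + 1) ≤ q) : (rowSum r j + a, q) ∉ assemble n r P := by
  simp only [assemble, Finset.mem_filter, Finset.mem_product, Finset.mem_range]
  rintro ⟨-, ⟨j', -, i, -, hrow, hcol, hij⟩ | ⟨j', hj', -, hrow, hcol, -⟩⟩
  · rw [hrow.eq ha] at hij
    have := rowSum_mono r (show j + 1 ≤ i by omega)
    have := hcol.2
    omega
  · obtain rfl : j' = j + 1 := by have := hrow.eq ha; omega
    have := hcol.2
    omega

lemma rowWord_assemble {P : ℕ → PD} {j a : ℕ} (hj : j < n) (ha : a < r j) :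
    rowWord (dTot n r) (assemble n r P) (rowSum r j + a) =
      (rowWord (r (j + 1)) (P (j + 1)) a).map (rowSum r j + fillWidth n r j + ·) ++
        (List.range (fillWidth n r j)).reverse.map (rowSum r j + a + ·) := by
  have h₁ : rowSum r (j + 2) = rowSum r (j + 1) + r (j + 1) := rowSum_succ r (j + 1)
  have h₂ := rowSum_le_dTot (n := n) (r := r) (show j + 2 ≤ n + 1 by omega)
  have hsplit : List.range (dTot n r) = List.range (fillWidth n r j) ++
      (List.range (r (j + 1))).map (fillWidth n r j + ·) ++
      (List.range (rowSum r (j + 1))).map (fillWidth n r j + r (j + 1) + ·) := by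
    rw [← List.range_add, ← List.range_add]
    congr 1
    unfold fillWidth
    omega
  have hempty :
      ((List.range (rowSum r (j + 1))).map (fillWidth n r j + r (j + 1) + ·)).reverse.filterMap
      (fun q => if (rowSum r j + a, q) ∈ assemble n r P then some (rowSum r j + a + q) else none)
      = [] := by
    refine List.filterMap_eq_nil_iff.mpr fun q hq => if_neg (notMem_assemble ha ?_)
    simp only [List.mem_reverse, List.mem_map] at hq
    obtain ⟨c, -, rfl⟩ := hq
    unfold fillWidth
    omega
  rw [rowWord, hsplit, List.reverse_append, List.reverse_append, List.filterMap_append,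
    List.filterMap_append, hempty, List.nil_append, rowWord, List.map_filterMap,
    ← List.map_reverse, List.filterMap_map, ← List.filterMap_eq_map]
  congr 1
  · refine List.filterMap_congr fun b hb => ?_
    rw [List.mem_reverse, List.mem_range] at hb
    simp only [Function.comp_apply, mem_assemble_fillWidth_add_iff (P := P) hj ha hb]
    split_ifs
    · simp only [Option.map_some, Option.some.injEq]
      omega
    · rfl
  · refine List.filterMap_congr fun q hq => ?_
    rw [List.mem_reverse, List.mem_range] at hq
    rw [if_pos (mem_assemble_of_lt_fillWidth hj ha hq), Function.comp_apply]

lemma rowWord_assemble_last {P : ℕ → PD} {a : ℕ} (ha : a < r n) :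
    rowWord (dTot n r) (assemble n r P) (rowSum r n + a) = [] :=
  List.filterMap_eq_nil_iff.mpr fun _ _ => if_neg (notMem_assemble ha (by simp [dTot]))

lemma range_rowSum (r : ℕ → ℕ) (m : ℕ) :
    List.range (rowSum r m) =
      (List.range m).flatMap fun j => (List.range (r j)).map (rowSum r j + ·) := by
  induction m with
  | zero => rfl
  | succ m ih =>
    rw [List.range_succ, List.flatMap_append, List.flatMap_singleton, ← ih, rowSum_succ,
      List.range_add]

lemma pdWord_assemble (P : ℕ → PD) :
    pdWord (dTot n r) (dTot n r) (assemble n r P) =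
      (List.range n).flatMap fun j => (List.range (r j)).flatMap fun a =>
        rowWord (dTot n r) (assemble n r P) (rowSum r j + a) := by
  rw [pdWord_eq_flatMap_rowWord, show List.range (dTot n r) = _ from range_rowSum r (n + 1),
    List.range_succ, List.flatMap_assoc, List.flatMap_append, List.flatMap_singleton]
  simp only [List.flatMap_map]
  rw [List.flatMap_eq_nil_iff.mpr fun a ha => rowWord_assemble_last (List.mem_range.mp ha),
    List.append_nil]

/-- The letters of `P (j + 1)`, placed in its superantidiagonal block. -/
def blockWord (n : ℕ) (r : ℕ → ℕ) (P : ℕ → PD) (j : ℕ) : List ℕ :=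
  (pdWord (r j) (r (j + 1)) (P (j + 1))).map (rowSum r j + fillWidth n r j + ·)

def fillWord (n : ℕ) (r : ℕ → ℕ) (j : ℕ) : List ℕ :=
  (List.range (r j)).flatMap fun a =>
    (List.range (fillWidth n r j)).reverse.map (rowSum r j + a + ·)

lemma demWord_blockRow (P : ℕ → PD) {j : ℕ} (hj : j < n) :
    demWord ((List.range (r j)).flatMap fun a =>
      rowWord (dTot n r) (assemble n r P) (rowSum r j + a)) =
      demWord (blockWord n r P j ++ fillWord n r j) := by
  rw [List.flatMap_congr fun a ha =>
      rowWord_assemble (r := r) (P := P) hj (List.mem_range.mp ha),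
    demWord_flatMap_append, blockWord, pdWord_eq_flatMap_rowWord, List.map_flatMap, fillWord]
  intro a b hab _ x hx y hy
  simp only [List.mem_map, List.mem_reverse, List.mem_range] at hx hy
  obtain ⟨q, hq, rfl⟩ := hx
  obtain ⟨c, hc, rfl⟩ := hy
  have := le_of_mem_rowWord hc
  omega

/-- Within a block row, the letters of the crossing tiles of a row commute with the letters of
`P (j + 1)` in all lower rows, so they can be collected after them. -/
lemma pdDelta_assemble (P : ℕ → PD) :
    pdDelta (dTot n r) (dTot n r) (assemble n r P) =
      demWord ((List.range n).flatMap fun j => blockWord n r P j ++ fillWord n r j) := by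
  rw [pdDelta, pdWord_assemble]
  exact demWord_flatMap_congr fun j hj => demWord_blockRow P (List.mem_range.mp hj)

lemma demWord_blockWord (P : ℕ → PD) (j : ℕ) :
    demWord (blockWord n r P j) =
      shiftPerm (rowSum r j + fillWidth n r j) (pdDelta (r j) (r (j + 1)) (P (j + 1))) :=
  demWord_map_add _ _

end Assemble

theorem stmt5_general (n : ℕ) (r : ℕ → ℕ) (L : ℕ → ℕ → ℕ → Prop)
    (P P' : ℕ → PD) (hP : LacingChoices n r L P) (hP' : LacingChoices n r L P') :
    pdDelta (dTot n r) (dTot n r) (assemble n r P) =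
      pdDelta (dTot n r) (dTot n r) (assemble n r P') := by
  rw [pdDelta_assemble, pdDelta_assemble]
  refine demWord_flatMap_congr fun j hj => demWord_append_congr ?_ rfl
  have hjn : j + 1 ≤ n := List.mem_range.mp hj
  obtain ⟨hgrid, -, hδ⟩ := hP (j + 1) (by omega) hjn
  obtain ⟨hgrid', -, hδ'⟩ := hP' (j + 1) (by omega) hjn
  rw [demWord_blockWord, demWord_blockWord]
  exact congrArg _ (pdDelta_eq_of_pdDelta_rot180_eq hgrid hgrid' (hδ.trans hδ'.symm))

/-- **Proposition (the Demazure product of a lacing diagram is well defined).**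
Fix a lacing diagram `w = (w_1, …, w_n)`.  The Demazure product of `P(P_1, …, P_n)`
is the same permutation for every choice of pipe dreams `P_1, …, P_n` with
`P̌_j ∈ 𝒫(w_j)` for all `j = 1, …, n`. -/
theorem stmt5 (n : ℕ) (r : ℕ → ℕ) (L : ℕ → ℕ → ℕ → Prop)
    (hL : IsLacingDiagram n r L)
    (P P' : ℕ → PD) (hP : LacingChoices n r L P) (hP' : LacingChoices n r L P') :
    pdDelta (dTot n r) (dTot n r) (assemble n r P) =
      pdDelta (dTot n r) (dTot n r) (assemble n r P') :=
  stmt5_general n r L P P' hP hP'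

end
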